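/- Let r > 0, Δ > 0, v > 0 be real numbers and define the adverse selection cost 𝓐(f) = v·((Δ − √(1+f)·(1+r))·(Δ² + Δ·√(1+f)·(1+r) + (1+f)·(r−2)·(r+1)) + (1+f)^{3/2}·r²·(r+1))/(3Δ). Then for every f > −1, 𝓐 is differentiable at f with derivative 𝓐′(f) = v·(1+r)·((r+2)·√(1+f) − 2Δ) / (2Δ); in particular 𝓐′(f) < 0 whenever Δ > (1+r)·√(1+f). -/

import Mathlib

/-!
Substituting `s = √(1 + f)` turns `𝓐` into a cubic polynomial in `s` (using `(1 + f)^{3/2} = s³`),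
whose derivative factors as `v (1 + r) s ((r + 2) s - 2Δ) / Δ`. The chain rule with
`ds/df = 1 / (2s)` cancels the factor `s`. If `(1 + r) s < Δ` then `s < Δ`, so
`(r + 2) s = (1 + r) s + s < 2Δ`.
-/

open Real

lemma rpow_three_halves_eq_sqrt_pow_three {x : ℝ} (hx : 0 ≤ x) : x ^ ((3 : ℝ) / 2) = √x ^ 3 := by
  rw [sqrt_eq_rpow, ← rpow_natCast, ← rpow_mul hx]
  norm_num

/-- The adverse selection cost written in the variable `s = √(1 + f)`. -/
noncomputable def adverseSelectionCostSqrt (r Δ v s : ℝ) : ℝ :=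
  v * ((Δ - s * (1 + r)) * (Δ ^ 2 + Δ * s * (1 + r) + s ^ 2 * (r - 2) * (r + 1)) +
    s ^ 3 * r ^ 2 * (r + 1)) / (3 * Δ)

lemma hasDerivAt_adverseSelectionCostSqrt (r Δ v s : ℝ) :
    HasDerivAt (adverseSelectionCostSqrt r Δ v)
      (v * (1 + r) * s * ((r + 2) * s - 2 * Δ) / Δ) s := by
  have hs := hasDerivAt_id' s
  have h := ((((hs.mul_const (1 + r)).const_sub Δ).mul
    ((((hs.const_mul Δ).mul_const (1 + r)).const_add (Δ ^ 2)).add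
      (((hs.pow 2).mul_const (r - 2)).mul_const (r + 1)))).add
    (((hs.pow 3).mul_const (r ^ 2)).mul_const (r + 1))).const_mul v |>.div_const (3 * Δ)
  refine h.congr_deriv ?_
  norm_num
  ring

lemma adverse_selection_deriv_neg {r Δ v s : ℝ} (hr : 0 ≤ r) (hΔ : 0 < Δ) (hv : 0 < v)
    (hs : 0 ≤ s) (h : (1 + r) * s < Δ) :
    v * (1 + r) * ((r + 2) * s - 2 * Δ) / (2 * Δ) < 0 := by
  have hsΔ : s < Δ := by nlinarith
  have hneg : (r + 2) * s - 2 * Δ < 0 := by linarith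
  exact div_neg_of_neg_of_pos (mul_neg_of_pos_of_neg (by positivity) hneg) (by positivity)

theorem adverse_selection_hasDerivAt
    (r Δ v : ℝ) (hr : 0 < r) (hΔ : 0 < Δ) (hv : 0 < v)
    (f : ℝ) (hf : -1 < f) :
    HasDerivAt (fun f : ℝ =>
        v * ((Δ - Real.sqrt (1 + f) * (1 + r)) *
              (Δ ^ 2 + Δ * Real.sqrt (1 + f) * (1 + r) + (1 + f) * (r - 2) * (r + 1)) +
            (1 + f) ^ ((3 : ℝ) / 2) * r ^ 2 * (r + 1)) / (3 * Δ))
      (v * (1 + r) * ((r + 2) * Real.sqrt (1 + f) - 2 * Δ) / (2 * Δ)) f ∧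
    ((1 + r) * Real.sqrt (1 + f) < Δ →
      v * (1 + r) * ((r + 2) * Real.sqrt (1 + f) - 2 * Δ) / (2 * Δ) < 0) := by
  refine ⟨?_, adverse_selection_deriv_neg hr.le hΔ hv (sqrt_nonneg _)⟩
  have hpos : 0 < 1 + f := by linarith
  have hsqrt : HasDerivAt (fun y => √(1 + y)) (1 / (2 * √(1 + f))) f := by
    simpa using ((hasDerivAt_id f).const_add 1).sqrt hpos.ne'
  have hcomp := (hasDerivAt_adverseSelectionCostSqrt r Δ v _).comp f hsqrt
  refine (hcomp.congr_deriv ?_).congr_of_eventuallyEq ?_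
  · have : √(1 + f) ≠ 0 := (sqrt_pos.mpr hpos).ne'
    field_simp
  · filter_upwards [Ioi_mem_nhds hf] with y hy
    have hy' : 0 ≤ 1 + y := by linarith [Set.mem_Ioi.mp hy]
    simp only [Function.comp_apply, adverseSelectionCostSqrt,
      rpow_three_halves_eq_sqrt_pow_three hy', sq_sqrt hy']
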